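/- arXiv:math-ph/0512008 — 2 statements merged into one kernel-verified Lean document; each statement's English description precedes it below -/
import Mathlib

section
/- Let γ_1, …, γ_k be linearly independent vectors in R^d with |γ_j| ≤ M for all j, spanning the subspace P = Span{γ_1,…,γ_k}. If x ∈ R^d satisfies |(x, γ_j)| ≤ E for all j = 1,…,k (up to the quadratic correction: |2(x,γ_j)+|γ_j|^2| ≤ E), then the orthogonal projection v of x onto P satisfies |v| ≤ C(k) (E + M^2) M^{k-1} / det_P, where det_P is the k-dimensional volume of the parallelepiped spanned by γ_1,…,γ_k. -/
/-!
Write the projection as `v = ∑ cⱼ γⱼ`. Since `x - v ⟂ γᵢ`, the coefficients solve the normal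
equations `G c = b` with `G` the Gram matrix and `bᵢ = ⟪γᵢ, x⟫`, and the hypothesis gives
`|bᵢ| ≤ (E + M²) / 2`. By Cramer's rule `det G · cⱼ` is the determinant of `G` with one column
replaced by `b`; expanding it by Leibniz, every term is a product of one entry of `b` and `k - 1`
entries of `G`, each at most `M²`. Hence `|cⱼ| det G ≤ k! (E + M²) M^{2(k-1)} / 2`, and
`‖v‖² = c ⬝ b` gives `‖v‖² det G ≲ (E + M²)² M^{2(k-1)}`; finally `det_P = √(det G)`.
-/

open Matrix Finset Submodule
open scoped Nat InnerProductSpace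

namespace Matrix

variable {n R S : Type*} [Fintype n] [DecidableEq n]

theorem det_le_factorial_smul_prod [CommRing R] [Nontrivial R] [CommRing S] [LinearOrder S]
    [IsStrictOrderedRing S] {A : Matrix n n R} {abv : AbsoluteValue R S} {f : n → S}
    (hf : ∀ i j, abv (A i j) ≤ f j) :
    abv A.det ≤ (Fintype.card n)! • ∏ j, f j :=
  calc abv A.det = abv (∑ σ : Equiv.Perm n, Equiv.Perm.sign σ • ∏ i, A (σ i) i) := by
        rw [det_apply]
    _ ≤ ∑ σ : Equiv.Perm n, abv (Equiv.Perm.sign σ • ∏ i, A (σ i) i) := abv.sum_le _ _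
    _ = ∑ σ : Equiv.Perm n, ∏ i, abv (A (σ i) i) := by
        simp only [abv.map_units_int_smul, abv.map_prod]
    _ ≤ ∑ _σ : Equiv.Perm n, ∏ j, f j := by
        gcongr with σ _ j
        exact hf _ _
    _ = (Fintype.card n)! • ∏ j, f j := by
        rw [sum_const, Finset.card_univ, Fintype.card_perm]

-- Cramer's rule with no invertibility assumption, from `adjugate A * A = det A • 1`.
theorem det_mul_eq_det_updateCol_mulVec [CommRing R] (A : Matrix n n R) (c : n → R) (j : n) :
    A.det * c j = (A.updateCol j (A *ᵥ c)).det := by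
  rw [← cramer_apply, cramer_eq_adjugate_mulVec, mulVec_mulVec, adjugate_mul, smul_mulVec,
    one_mulVec, Pi.smul_apply, smul_eq_mul]

variable [CommRing R] [LinearOrder R] [IsStrictOrderedRing R]

theorem abs_det_mul_abs_le_of_mulVec_eq {A : Matrix n n R} {b c : n → R} (hAc : A *ᵥ c = b)
    {m β : R} (hA : ∀ i j, |A i j| ≤ m) (hb : ∀ i, |b i| ≤ β) (j : n) :
    |A.det| * |c j| ≤ (Fintype.card n)! * (β * m ^ (Fintype.card n - 1)) := by
  rw [← abs_mul, det_mul_eq_det_updateCol_mulVec, hAc]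
  calc |(A.updateCol j b).det|
      ≤ (Fintype.card n)! • ∏ j', Function.update (fun _ => m) j β j' :=
        det_le_factorial_smul_prod (abv := AbsoluteValue.abs) fun i j' => by
          rcases eq_or_ne j' j with rfl | h
          · simpa using hb i
          · simpa [h] using hA i j'
    _ = (Fintype.card n)! * (β * m ^ (Fintype.card n - 1)) := by
        rw [nsmul_eq_mul, prod_update_of_mem (mem_univ j), prod_const, ← compl_eq_univ_sdiff,
          card_compl, card_singleton]

theorem dotProduct_mul_abs_det_le_of_mulVec_eq {A : Matrix n n R} {b c : n → R}
    (hAc : A *ᵥ c = b) {m β : R} (hA : ∀ i j, |A i j| ≤ m) (hb : ∀ i, |b i| ≤ β) :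
    c ⬝ᵥ b * |A.det| ≤ Fintype.card n * (Fintype.card n)! * β ^ 2 * m ^ (Fintype.card n - 1) :=
  calc c ⬝ᵥ b * |A.det| = ∑ j, |A.det| * c j * b j := by
        simp only [dotProduct, sum_mul]
        exact sum_congr rfl fun j _ => by ring
    _ ≤ ∑ j, |A.det| * |c j| * |b j| := by
        refine sum_le_sum fun j _ => ?_
        rw [mul_assoc, mul_assoc, ← abs_mul]
        exact mul_le_mul_of_nonneg_left (le_abs_self _) (abs_nonneg _)
    _ ≤ ∑ _j : n, (Fintype.card n)! * (β * m ^ (Fintype.card n - 1)) * β := by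
        refine sum_le_sum fun j _ => ?_
        have hcj := abs_det_mul_abs_le_of_mulVec_eq hAc hA hb j
        exact mul_le_mul hcj (hb j) (abs_nonneg _) ((by positivity : (0 : R) ≤ _).trans hcj)
    _ = _ := by rw [sum_const, Finset.card_univ, nsmul_eq_mul]; ring

section InnerProductSpace

variable {E ι : Type*} [NormedAddCommGroup E] [InnerProductSpace ℝ E] [Fintype ι]

theorem gram_mulVec_apply (γ : ι → E) (c : ι → ℝ) (i : ι) :
    (gram ℝ γ *ᵥ c) i = ⟪γ i, ∑ j, c j • γ j⟫_ℝ := by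
  simp [mulVec, dotProduct, inner_sum, inner_smul_right, mul_comm]

theorem norm_sq_starProjection_span_mul_abs_det_gram_le [DecidableEq ι] {γ : ι → E}
    [(span ℝ (Set.range γ)).HasOrthogonalProjection] {m β : ℝ}
    (hγ : ∀ i j, |⟪γ i, γ j⟫_ℝ| ≤ m) {x : E} (hx : ∀ j, |⟪γ j, x⟫_ℝ| ≤ β) :
    ‖(span ℝ (Set.range γ)).starProjection x‖ ^ 2 * |(gram ℝ γ).det| ≤
      Fintype.card ι * (Fintype.card ι)! * β ^ 2 * m ^ (Fintype.card ι - 1) := by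
  set K := span ℝ (Set.range γ)
  obtain ⟨c, hc⟩ := (mem_span_range_iff_exists_fun ℝ).mp (K.starProjection_apply_mem x)
  have hGc : gram ℝ γ *ᵥ c = fun j => ⟪γ j, x⟫_ℝ := by
    funext i
    rw [gram_mulVec_apply, hc, ← inner_starProjection_left_eq_right,
      K.starProjection_eq_self_iff.mpr (subset_span (Set.mem_range_self i))]
  have hnorm : ‖K.starProjection x‖ ^ 2 = c ⬝ᵥ fun j => ⟪γ j, x⟫_ℝ := by
    rw [← hGc, ← real_inner_self_eq_norm_sq, ← hc, ← star_dotProduct_gram_mulVec, star_trivial]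
  rw [hnorm]
  exact dotProduct_mul_abs_det_le_of_mulVec_eq hGc hγ hx

end InnerProductSpace

end Matrix

theorem le_div_sqrt_of_sq_mul_le {y a D : ℝ} (hy : 0 ≤ y) (ha : 0 ≤ a) (hD : 0 < D)
    (h : y ^ 2 * D ≤ a ^ 2) : y ≤ a / √D := by
  rw [le_div_iff₀ (Real.sqrt_pos.mpr hD)]
  calc y * √D = √(y ^ 2 * D) := by rw [Real.sqrt_mul (sq_nonneg y), Real.sqrt_sq hy]
    _ ≤ √(a ^ 2) := Real.sqrt_le_sqrt h
    _ = a := Real.sqrt_sq ha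

/-- projection estimate. If `γ_1,…,γ_k` are linearly independent with
`|γ_j| ≤ M` and `|2(x,γ_j) + |γ_j|²| ≤ E` for all `j`, then the orthogonal projection
`v` of `x` onto `P = Span{γ_1,…,γ_k}` satisfies
`|v| ≤ C(k) (E + M²) M^{k-1} / det_P`, where `det_P` is the `k`-dimensional volume of
the parallelepiped spanned by the `γ_j` (the square root of the Gram determinant). -/
theorem projection_estimate (k : ℕ) :
    ∃ C : ℝ, 0 < C ∧ ∀ (d : ℕ) (M E : ℝ), 0 ≤ E →
      ∀ (γ : Fin k → EuclideanSpace ℝ (Fin d)), LinearIndependent ℝ γ →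
        (∀ j, ‖γ j‖ ≤ M) →
        ∀ x : EuclideanSpace ℝ (Fin d),
          (∀ j, |2 * (inner ℝ x (γ j) : ℝ) + ‖γ j‖ ^ 2| ≤ E) →
          ‖(Submodule.orthogonalProjection (Submodule.span ℝ (Set.range γ)) x :
              EuclideanSpace ℝ (Fin d))‖ ≤
            C * (E + M ^ 2) * M ^ (k - 1) /
              Real.sqrt ((Matrix.of fun i j => (inner ℝ (γ i) (γ j) : ℝ)).det) := by
  refine ⟨(k + 1)!, by positivity, ?_⟩
  intro d M E hE γ hγ hM x hx
  have hM0 : ∀ j, 0 ≤ M := fun j => (norm_nonneg _).trans (hM j)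
  have hgram : ∀ i j, |⟪γ i, γ j⟫_ℝ| ≤ M ^ 2 := fun i j =>
    (abs_real_inner_le_norm _ _).trans <| by
      rw [sq]; exact mul_le_mul (hM i) (hM j) (norm_nonneg _) (hM0 i)
  have hinner : ∀ j, |⟪γ j, x⟫_ℝ| ≤ (E + M ^ 2) / 2 := fun j => by
    have hγj : ‖γ j‖ ^ 2 ≤ M ^ 2 := pow_le_pow_left₀ (norm_nonneg _) (hM j) 2
    obtain ⟨hlo, hhi⟩ := abs_le.mp (hx j)
    rw [real_inner_comm]
    exact abs_le.mpr ⟨by nlinarith [norm_nonneg (γ j)], by nlinarith [norm_nonneg (γ j)]⟩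
  have hdet : 0 < (gram ℝ γ).det := (posDef_gram_of_linearIndependent hγ).det_pos
  have key := norm_sq_starProjection_span_mul_abs_det_gram_le hgram hinner
  rw [abs_of_pos hdet, Fintype.card_fin] at key
  have hMpow : 0 ≤ M ^ (k - 1) := by
    rcases k with _ | k
    · simp
    · exact pow_nonneg (hM0 0) _
  refine le_div_sqrt_of_sq_mul_le (norm_nonneg _) (by positivity) hdet (key.trans ?_)
  have hfac : (k * k ! : ℝ) ≤ ((k + 1)! : ℝ) ^ 2 := by
    exact_mod_cast (Nat.mul_le_mul_right _ k.le_succ).trans (Nat.le_self_pow two_ne_zero _)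
  calc _ = (k * k ! : ℝ) / 4 * ((E + M ^ 2) * M ^ (k - 1)) ^ 2 := by
        rw [← pow_mul, mul_comm 2, pow_mul]; ring
    _ ≤ ((k + 1)! : ℝ) ^ 2 * ((E + M ^ 2) * M ^ (k - 1)) ^ 2 := by
        gcongr
        exact (div_le_self (by positivity) (by norm_num)).trans hfac
    _ = _ := by ring
end

section
/- Let γ_1, …, γ_d be linearly independent vectors of a lattice Γ with |γ_j| < p ρ^α, and let α_d = 3^d α where α = 1/(3^d+d+2). For ρ sufficiently large, the intersection ∩_{j=1}^d V^1_{γ_j}(ρ^{α_d}) ∩ B(ρ) is empty, where V^1_γ(δ) = {x : ||x|^2 − |x+γ|^2| < δ} and B(ρ) = {x : |x| = ρ}. -/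
/-!
Write `γ_j = ∑ i, n j i • B i` with an integer matrix `N = (n j i)`, and put `u i = ⟪B i, x⟫`.
Expanding `‖x + γ_j‖²` turns the hypothesis into `|(N u)_j| = |⟪γ_j, x⟫| ≲ ρ^{α_d} + ‖γ_j‖²`.
Since `N` is a nonsingular integer matrix, `|det N| ≥ 1`, so Cramer's rule bounds `u`, and hence
`x`, by `(max |n j i|)^d` times that quantity, i.e. by `ρ^{dα + α_d} + ρ^{(d+2)α}`. Both exponents
are `< 1` because `α (3^d + d + 2) = 1`, which is incompatible with `‖x‖ = ρ` for large `ρ`.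
-/

open Filter Asymptotics Matrix
open scoped Nat RealInnerProductSpace

namespace Matrix

variable {ι : Type*} [Fintype ι] [DecidableEq ι]

theorem abs_adjugate_apply_le {A : Matrix ι ι ℝ} {K : ℝ} (hK : 1 ≤ K)
    (hA : ∀ i j, |A i j| ≤ K) (i j : ι) :
    |A.adjugate i j| ≤ (Fintype.card ι)! * K ^ Fintype.card ι := by
  rw [adjugate_apply, ← nsmul_eq_mul]
  refine det_le (abv := AbsoluteValue.abs) fun a b => ?_
  rw [updateRow_apply]
  split_ifs
  · rcases eq_or_ne b i with rfl | hb <;> simp [*, zero_le_one.trans hK]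
  · exact hA a b

theorem abs_le_of_abs_mulVec_le {A : Matrix ι ι ℝ} (hdet : 1 ≤ |A.det|) {K M : ℝ} (hK : 1 ≤ K)
    (hA : ∀ i j, |A i j| ≤ K) {u : ι → ℝ} (hu : ∀ j, |(A *ᵥ u) j| ≤ M) (k : ι) :
    |u k| ≤ Fintype.card ι * ((Fintype.card ι)! * K ^ Fintype.card ι) * M := by
  have hcramer : A.det * u k = ∑ j, A.adjugate k j * (A *ᵥ u) j := by
    have h : A.det • u = A.adjugate *ᵥ (A *ᵥ u) := by
      rw [mulVec_mulVec, adjugate_mul, smul_mulVec, one_mulVec]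
    simpa only [Pi.smul_apply, smul_eq_mul, mulVec, dotProduct] using congrFun h k
  calc |u k| ≤ |A.det| * |u k| := le_mul_of_one_le_left (abs_nonneg _) hdet
    _ = |∑ j, A.adjugate k j * (A *ᵥ u) j| := by rw [← abs_mul, hcramer]
    _ ≤ ∑ j, |A.adjugate k j| * |(A *ᵥ u) j| :=
      (Finset.abs_sum_le_sum_abs _ _).trans_eq (by simp only [abs_mul])
    _ ≤ ∑ _j : ι, (Fintype.card ι)! * K ^ Fintype.card ι * M := by
      gcongr with j
      · exact abs_adjugate_apply_le hK hA k j
      · exact hu j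
    _ = _ := by simp [mul_assoc]

theorem one_le_abs_det_intCast {N : Matrix ι ι ℤ} (h : (N.map ((↑) : ℤ → ℝ)).det ≠ 0) :
    1 ≤ |(N.map ((↑) : ℤ → ℝ)).det| := by
  rw [← Int.cast_det] at h ⊢
  exact_mod_cast Int.one_le_abs (by exact_mod_cast h)

end Matrix

theorem Module.Basis.det_ne_zero_of_linearIndependent {ι K V : Type*} [Fintype ι] [DecidableEq ι]
    [Field K] [AddCommGroup V] [Module K V] (B : Basis ι K V) {A : Matrix ι ι K}
    (h : LinearIndependent K fun j => ∑ i, A j i • B i) : A.det ≠ 0 := by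
  have hrows : LinearIndependent K fun j => A j :=
    .of_comp B.equivFun.symm.toLinearMap (by simpa [Function.comp_def] using h)
  exact ((isUnit_iff_isUnit_det A).1 (linearIndependent_rows_iff_isUnit.1 hrows)).ne_zero

section InnerProductSpace

variable {E : Type*} [NormedAddCommGroup E] [InnerProductSpace ℝ E]

theorem abs_inner_le_of_abs_norm_sq_sub_lt {x γ : E} {δ : ℝ}
    (h : |‖x‖ ^ 2 - ‖x + γ‖ ^ 2| < δ) : |⟪γ, x⟫| ≤ (δ + ‖γ‖ ^ 2) / 2 := by
  rw [norm_add_sq_real, real_inner_comm] at h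
  obtain ⟨h₁, h₂⟩ := abs_lt.1 h
  have := sq_nonneg ‖γ‖
  exact abs_le.2 ⟨by linarith, by linarith⟩

namespace Module.Basis

variable {ι : Type*} [Fintype ι] (B : Basis ι ℝ E)

theorem norm_le_of_abs_inner_le {c U : ℝ} (hc₀ : 0 ≤ c) (hc : ∀ v i, |B.repr v i| ≤ c * ‖v‖)
    (hU : 0 ≤ U) {x : E} (h : ∀ i, |⟪B i, x⟫| ≤ U) : ‖x‖ ≤ Fintype.card ι * c * U := by
  rcases (norm_nonneg x).eq_or_lt with hx | hx
  · rw [← hx]; positivity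
  refine le_of_mul_le_mul_right ?_ hx
  calc ‖x‖ * ‖x‖ = ⟪∑ i, B.repr x i • B i, x⟫ := by rw [B.sum_repr, real_inner_self_eq_norm_mul_norm]
    _ = ∑ i, B.repr x i * ⟪B i, x⟫ := by simp only [sum_inner, real_inner_smul_left]
    _ ≤ ∑ i, |B.repr x i| * |⟪B i, x⟫| := Finset.sum_le_sum fun i _ => by
      rw [← abs_mul]; exact le_abs_self _
    _ ≤ ∑ _i : ι, c * ‖x‖ * U := by
      gcongr with i
      · exact hc x i
      · exact h i
    _ = Fintype.card ι * c * U * ‖x‖ := by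
      simp only [Finset.sum_const, Finset.card_univ, nsmul_eq_mul]; ring

variable [DecidableEq ι]

theorem exists_norm_le_of_abs_inner_le : ∃ C, 0 ≤ C ∧ ∀ n : ι → ι → ℤ,
    LinearIndependent ℝ (fun j => ∑ i, (n j i : ℝ) • B i) → ∀ K M : ℝ, 0 ≤ K →
    (∀ j, ‖∑ i, (n j i : ℝ) • B i‖ ≤ K) → 0 ≤ M → ∀ x : E,
    (∀ j, |⟪∑ i, (n j i : ℝ) • B i, x⟫| ≤ M) → ‖x‖ ≤ C * (K + 1) ^ Fintype.card ι * M := by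
  set c := ‖(B.equivFunL : E →L[ℝ] ι → ℝ)‖
  have hc₀ : 0 ≤ c := norm_nonneg _
  have hc : ∀ v i, |B.repr v i| ≤ c * ‖v‖ := fun v i =>
    (norm_le_pi_norm (B.equivFunL v) i).trans ((B.equivFunL : E →L[ℝ] ι → ℝ).le_opNorm v)
  set d := Fintype.card ι
  refine ⟨d * c * (d * d ! * (c + 1) ^ d), by positivity, ?_⟩
  intro n hli K M hK hγ hM x hx
  set A : Matrix ι ι ℝ := (Matrix.of n).map (↑)
  have hdet : 1 ≤ |A.det| := Matrix.one_le_abs_det_intCast (B.det_ne_zero_of_linearIndependent hli)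
  have hA : ∀ j i, |A j i| ≤ (c + 1) * (K + 1) := fun j i => by
    have hrepr := hc (∑ i, (n j i : ℝ) • B i) i
    rw [B.repr_sum_self] at hrepr
    calc |A j i| ≤ c * K := hrepr.trans (mul_le_mul_of_nonneg_left (hγ j) hc₀)
      _ ≤ (c + 1) * (K + 1) := by nlinarith
  have hAu : ∀ j, |(A *ᵥ fun i => ⟪B i, x⟫) j| ≤ M := fun j => by
    simpa [Matrix.mulVec, dotProduct, sum_inner, real_inner_smul_left, A] using hx j
  have hu := Matrix.abs_le_of_abs_mulVec_le hdet (by nlinarith) hA hAu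
  calc ‖x‖ ≤ d * c * (d * (d ! * ((c + 1) * (K + 1)) ^ d) * M) :=
        B.norm_le_of_abs_inner_le hc₀ hc (by positivity) hu
    _ = _ := by rw [mul_pow]; ring

end Module.Basis

end InnerProductSpace

theorem isLittleO_rpow_id {a : ℝ} (ha : a < 1) : (fun ρ : ℝ => ρ ^ a) =o[atTop] id := by
  have h : (fun ρ : ℝ => ρ ^ (a - 1)) =o[atTop] fun _ => (1 : ℝ) :=
    (isLittleO_one_iff ℝ).2 (by simpa using tendsto_rpow_neg_atTop (y := 1 - a) (by linarith))
  refine (h.mul_isBigO (isBigO_refl id atTop)).congr' ?_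
    (.of_eq (funext fun _ => one_mul _))
  filter_upwards [eventually_gt_atTop 0] with ρ hρ
  rw [id, ← Real.rpow_add_one hρ.ne', sub_add_cancel]

theorem eventually_mul_add_rpow_pow_mul_lt_self {α a C p : ℝ} {d : ℕ} (hα : 0 ≤ α)
    (ha : α * d + a < 1) (hα₂ : α * (d + 2) < 1) (hC : 0 ≤ C) (hp : 0 ≤ p) :
    ∀ᶠ ρ in atTop, C * (p * ρ ^ α + 1) ^ d * ((ρ ^ a + (p * ρ ^ α) ^ 2) / 2) < ρ := by
  set f : ℝ → ℝ := fun ρ => C * (p + 1) ^ d / 2 * (ρ ^ (α * d + a) + p ^ 2 * ρ ^ (α * d + α + α))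
  have hf : f =o[atTop] id := ((isLittleO_rpow_id ha).add
    ((isLittleO_rpow_id (by linarith)).const_mul_left _)).const_mul_left _
  filter_upwards [hf.eventuallyLT_norm_of_eventually_pos
    ((eventually_gt_atTop 0).mono fun ρ hρ => by simpa using hρ.ne'), eventually_ge_atTop 1]
    with ρ hlt hρ₁
  have hρ : 0 < ρ := zero_lt_one.trans_le hρ₁
  have : 1 ≤ ρ ^ α := Real.one_le_rpow hρ₁ hα
  calc _ ≤ C * ((p + 1) * ρ ^ α) ^ d * ((ρ ^ a + (p * ρ ^ α) ^ 2) / 2) := by gcongr; nlinarith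
    _ = f ρ := by
      simp only [f, Real.rpow_add hρ, Real.rpow_mul_natCast hρ.le, mul_pow]; ring
    _ ≤ |f ρ| := le_abs_self _
    _ < ρ := by simpa [abs_of_pos hρ] using hlt

theorem full_intersection_empty_general
    (d : ℕ) (B : Module.Basis (Fin d) ℝ (EuclideanSpace ℝ (Fin d)))
    (p : ℝ) (hp : 0 < p) :
    ∃ ρ₀ : ℝ, ∀ ρ : ℝ, ρ₀ ≤ ρ →
      ∀ n : Fin d → (Fin d → ℤ),
        LinearIndependent ℝ (fun j => ∑ i, (n j i : ℝ) • B i) →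
        (∀ j, ‖∑ i, (n j i : ℝ) • B i‖ < p * ρ ^ ((1 : ℝ) / (3 ^ d + d + 2))) →
        ∀ x : EuclideanSpace ℝ (Fin d), ‖x‖ = ρ →
          ¬ (∀ j, |‖x‖ ^ 2 - ‖x + ∑ i, (n j i : ℝ) • B i‖ ^ 2| <
              ρ ^ ((3 : ℝ) ^ d * ((1 : ℝ) / (3 ^ d + d + 2)))) := by
  set α : ℝ := 1 / (3 ^ d + d + 2)
  have hα : α * (3 ^ d + d + 2) = 1 := one_div_mul_cancel (by positivity)
  have h3 : (0 : ℝ) < 3 ^ d := by positivity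
  obtain ⟨C, hC₀, hC⟩ := B.exists_norm_le_of_abs_inner_le
  obtain ⟨ρ₀, hρ₀⟩ := eventually_atTop.1 <| eventually_mul_add_rpow_pow_mul_lt_self
    (α := α) (a := 3 ^ d * α) (d := d) (by positivity) (by nlinarith) (by nlinarith) hC₀ hp.le
  refine ⟨ρ₀, fun ρ hρ₀ρ n hli hγ x hx hV => ?_⟩
  have hρ : 0 ≤ ρ := hx ▸ norm_nonneg x
  have hinner : ∀ j, |⟪∑ i, (n j i : ℝ) • B i, x⟫| ≤ (ρ ^ (3 ^ d * α) + (p * ρ ^ α) ^ 2) / 2 :=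
    fun j => (abs_inner_le_of_abs_norm_sq_sub_lt (hV j)).trans (by gcongr; exact (hγ j).le)
  have hx_le := hC n hli _ _ (by positivity) (fun j => (hγ j).le) (by positivity) x hinner
  rw [Fintype.card_fin, hx] at hx_le
  exact (hρ₀ ρ hρ₀ρ).not_ge hx_le

/-- with `α = 1/(3^d+d+2)` and `α_d = 3^d α`, for `ρ` sufficiently
large, there is no `x` with `|x| = ρ` lying in `∩_{j=1}^d V¹_{γ_j}(ρ^{α_d})` for
linearly independent lattice vectors `γ_1,…,γ_d` with `|γ_j| < pρ^α`. -/
theorem full_intersection_empty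
    (d : ℕ) (hd : 2 ≤ d) (B : Module.Basis (Fin d) ℝ (EuclideanSpace ℝ (Fin d)))
    (p : ℝ) (hp : 0 < p) :
    ∃ ρ₀ : ℝ, ∀ ρ : ℝ, ρ₀ ≤ ρ →
      ∀ n : Fin d → (Fin d → ℤ),
        LinearIndependent ℝ (fun j => ∑ i, (n j i : ℝ) • B i) →
        (∀ j, ‖∑ i, (n j i : ℝ) • B i‖ < p * ρ ^ ((1 : ℝ) / (3 ^ d + d + 2))) →
        ∀ x : EuclideanSpace ℝ (Fin d), ‖x‖ = ρ →
          ¬ (∀ j, |‖x‖ ^ 2 - ‖x + ∑ i, (n j i : ℝ) • B i‖ ^ 2| <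
              ρ ^ ((3 : ℝ) ^ d * ((1 : ℝ) / (3 ^ d + d + 2)))) :=
  full_intersection_empty_general d B p hp
end
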